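/- Let g be a homogeneous polynomial of degree 4 on ℝ². Then |G₁(g)| < +∞ if and only if G₁(g) = {(x,y) ∈ ℝ² : g(x,y) ≤ 1} is bounded. Moreover, the set 𝔽₄(ℝ²) of homogeneous degree-4 polynomials in two variables with |G₁(g)| < +∞ is an open subset of the space of homogeneous degree-4 polynomials in two variables. In particular, for g(x,y) = a x⁴ + 2b x²y² + c y⁴, one has |G₁(g)| < +∞ if and only if a > 0, c > 0 and b > −√(ac), and this holds if and only if G₁(g) is bounded. -/

import Mathlib

/-!
Everything is decided by positive definiteness of `g`. If `g` is positive definite, compactness of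
the unit sphere gives `g x ≥ m ‖x‖⁴` with `m > 0`, so `G₁(g)` is bounded, and this bound survives
small perturbations of the coefficients. Otherwise `g v ≤ 0` for some `v ≠ 0`, so `G₁(g)` contains
the ray through `v`, and its area is infinite as well: either `g < 0` on a nonempty open cone, or
`g ≥ 0` vanishes at `v`. In the latter case rotate `v` to `(1, 0)`; then the `x⁴` coefficient
vanishes, and so does the `x³y` coefficient, the derivative at the minimum `0` of `s ↦ g(1, s)`.
Hence `g(x, y) = O((xy)²)` near the positive `x`-axis, and `G₁(g)` contains a region
`{x ≥ 1, |xy| ≤ δ}`, whose area `∫₁^∞ 2δ/x dx` diverges. For the canonical form, positive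
definiteness is strict copositivity of `a X² + 2b XY + c Y²` in `(X, Y) = (x², y²)`.
-/

open MeasureTheory

noncomputable section

/-- `G₁(g) = {x ∈ ℝⁿ : g(x) ≤ 1}`, the sublevel set of a polynomial at level 1. -/
def G1 {n : ℕ} (g : MvPolynomial (Fin n) ℝ) : Set (Fin n → ℝ) :=
  {x | MvPolynomial.eval x g ≤ 1}

/-- The canonical form `a x⁴ + 2b x²y² + c y⁴` of a degree-4 homogeneous polynomial on `ℝ²`. -/
def canon (a b c : ℝ) : MvPolynomial (Fin 2) ℝ :=
  MvPolynomial.C a * MvPolynomial.X 0 ^ 4 +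
    MvPolynomial.C (2 * b) * MvPolynomial.X 0 ^ 2 * MvPolynomial.X 1 ^ 2 +
    MvPolynomial.C c * MvPolynomial.X 1 ^ 4

open MvPolynomial Finset Matrix Pointwise

theorem volume_regionBetween_neg_div_div_eq_top {δ : ℝ} (hδ : 0 < δ) :
    volume (regionBetween (fun x => -(δ / x)) (fun x => δ / x) (Set.Ici 1)) = ⊤ := by
  rw [Measure.volume_eq_prod, volume_regionBetween_eq_lintegral' (by fun_prop) (by fun_prop)
    measurableSet_Ici]
  by_contra hfin
  have hint : IntegrableOn (fun x : ℝ => 2 * δ * x⁻¹) (Set.Ici 1) := by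
    refine ⟨by fun_prop, (hasFiniteIntegral_iff_ofReal ?_).2 ?_⟩
    · filter_upwards [ae_restrict_mem measurableSet_Ici] with x hx
      have : (0 : ℝ) < x := zero_lt_one.trans_le hx
      positivity
    · convert lt_top_iff_ne_top.2 hfin using 4 with x
      simp only [Pi.sub_apply]
      ring
  exact not_integrableOn_Ici_inv (IntegrableOn.congr_fun (hint.const_mul (2 * δ)⁻¹)
    (fun x _ => by field_simp) measurableSet_Ici)

theorem volume_setOf_one_le_and_abs_mul_le_eq_top {δ : ℝ} (hδ : 0 < δ) :
    volume {x : Fin 2 → ℝ | 1 ≤ x 0 ∧ |x 0 * x 1| ≤ δ} = ⊤ := by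
  have hsub : regionBetween (fun x => -(δ / x)) (fun x => δ / x) (Set.Ici 1) ⊆
      MeasurableEquiv.finTwoArrow.symm ⁻¹' {x : Fin 2 → ℝ | 1 ≤ x 0 ∧ |x 0 * x 1| ≤ δ} := by
    rintro ⟨x, y⟩ ⟨hx, hy⟩
    have hx0 : 0 < x := zero_lt_one.trans_le hx
    refine ⟨hx, ?_⟩
    simp only [MeasurableEquiv.finTwoArrow_symm_apply, Fin.cons_zero, Fin.cons_one]
    rw [abs_mul, abs_of_pos hx0, ← le_div_iff₀' hx0, abs_le]
    exact ⟨hy.1.le, hy.2.le⟩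
  rw [← (volume_preserving_finTwoArrow ℝ).symm.measure_preimage_equiv, ← top_le_iff,
    ← volume_regionBetween_neg_div_div_eq_top hδ]
  exact measure_mono hsub

theorem quadratic_pos_on_quadrant_iff {a b c : ℝ} :
    (∀ X Y : ℝ, 0 ≤ X → 0 ≤ Y → 0 < X + Y → 0 < a * X ^ 2 + 2 * b * X * Y + c * Y ^ 2) ↔
      0 < a ∧ 0 < c ∧ -√(a * c) < b := by
  constructor
  · intro h
    have ha : 0 < a := by simpa using h 1 0
    have hc : 0 < c := by simpa using h 0 1
    refine ⟨ha, hc, ?_⟩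
    have hac := h √c √a (by positivity) (by positivity) (by positivity)
    rw [Real.sq_sqrt hc.le, Real.sq_sqrt ha.le, mul_assoc _ √c, ← Real.sqrt_mul hc.le,
      mul_comm c a] at hac
    nlinarith [Real.sqrt_pos.2 (mul_pos ha hc), Real.mul_self_sqrt (mul_pos ha hc).le]
  · rintro ⟨ha, hc, hb⟩ X Y hX hY hXY
    rcases le_or_gt 0 b with hb0 | hb0
    · rcases eq_or_lt_of_le hX with rfl | hX'
      · nlinarith [pow_pos hXY 2]
      · nlinarith [pow_pos hX' 2, mul_nonneg hX hY, sq_nonneg Y]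
    · have hb2 : b ^ 2 < a * c := by
        nlinarith [Real.sq_sqrt (mul_pos ha hc).le, Real.sqrt_nonneg (a * c)]
      rcases eq_or_lt_of_le hY with rfl | hY'
      · nlinarith [pow_pos hXY 2]
      · nlinarith [sq_nonneg (a * X + b * Y), mul_pos (sub_pos.2 hb2) (pow_pos hY' 2)]

namespace MvPolynomial

def IsPosDef {σ : Type*} (φ : MvPolynomial σ ℝ) : Prop :=
  ∀ x : σ → ℝ, x ≠ 0 → 0 < eval x φ

theorem IsHomogeneous.eval_smul {σ R : Type*} [CommSemiring R] {φ : MvPolynomial σ R} {n : ℕ}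
    (hφ : φ.IsHomogeneous n) (t : R) (x : σ → R) :
    eval (t • x) φ = t ^ n * eval x φ := by
  rw [eval_eq, eval_eq, mul_sum]
  refine sum_congr rfl fun d hd => ?_
  have hdeg : d.degree = n := by
    by_contra h
    exact mem_support_iff.1 hd (hφ.coeff_eq_zero h)
  simp only [Pi.smul_apply, smul_eq_mul, mul_pow, prod_mul_distrib, prod_pow_eq_pow_sum,
    ← Finsupp.degree_apply, hdeg]
  ring

def linearSubst {σ R : Type*} [Fintype σ] [CommSemiring R] (M : Matrix σ σ R)
    (φ : MvPolynomial σ R) : MvPolynomial σ R :=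
  bind₁ (fun i => ∑ j, C (M i j) * X j) φ

section linearSubst

variable {σ R : Type*} [Fintype σ] [CommSemiring R] (M : Matrix σ σ R) {φ : MvPolynomial σ R}

theorem eval_linearSubst (x : σ → R) : eval x (φ.linearSubst M) = eval (M *ᵥ x) φ := by
  rw [linearSubst, eval, eval₂Hom_bind₁, eval]
  exact congrArg (eval₂Hom (RingHom.id R) · φ) (by ext i; simp [mulVec, dotProduct])

theorem IsHomogeneous.linearSubst {n : ℕ} (hφ : φ.IsHomogeneous n) :
    (φ.linearSubst M).IsHomogeneous n := by
  simpa [MvPolynomial.linearSubst] using hφ.aeval _ fun i =>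
    IsHomogeneous.sum univ (fun j => C (M i j) * X j) 1 fun j _ => (isHomogeneous_X R j).C_mul _

end linearSubst

theorem IsHomogeneous.exists_pos_mul_norm_pow_le {σ : Type*} [Fintype σ] {φ : MvPolynomial σ ℝ}
    {n : ℕ} (hφ : φ.IsHomogeneous n) (hpos : φ.IsPosDef) :
    ∃ m > 0, ∀ x, x ≠ 0 → m * ‖x‖ ^ n ≤ eval x φ := by
  obtain ⟨m, hm, hmin⟩ := (isCompact_sphere (0 : σ → ℝ) 1).exists_forall_le'
    (continuous_eval φ).continuousOn fun u hu => hpos u (ne_zero_of_mem_unit_sphere ⟨u, hu⟩)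
  refine ⟨m, hm, fun x hx => ?_⟩
  have hx' : ‖x‖ ≠ 0 := norm_ne_zero_iff.2 hx
  have hu : ‖x‖⁻¹ • x ∈ Metric.sphere (0 : σ → ℝ) 1 := by simp [norm_smul, hx']
  calc m * ‖x‖ ^ n ≤ eval (‖x‖⁻¹ • x) φ * ‖x‖ ^ n := by gcongr; exact hmin _ hu
    _ = eval x φ := by rw [hφ.eval_smul, inv_pow]; field_simp

section SublevelSet

variable {k n : ℕ} {φ : MvPolynomial (Fin k) ℝ}

theorem volume_G1_linearSubst (M : Matrix (Fin k) (Fin k) ℝ) (hM : M.det ≠ 0) :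
    volume (G1 (φ.linearSubst M)) = ENNReal.ofReal |M.det⁻¹| * volume (G1 φ) := by
  have hpre : G1 (φ.linearSubst M) = toLin' M ⁻¹' G1 φ := by
    ext x
    simp [G1, eval_linearSubst]
  rw [hpre, Measure.addHaar_preimage_linearMap volume (by rwa [LinearMap.det_toLin']),
    LinearMap.det_toLin']

theorem IsHomogeneous.isBounded_G1_iff (hφ : φ.IsHomogeneous n) (hn : n ≠ 0) :
    Bornology.IsBounded (G1 φ) ↔ φ.IsPosDef := by
  constructor
  · intro hb v hv
    by_contra! hle
    obtain ⟨R, hR⟩ := isBounded_iff_forall_norm_le.1 hb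
    have hvn : 0 < ‖v‖ := norm_pos_iff.2 hv
    set t := (|R| + 1) / ‖v‖
    have hmem : t • v ∈ G1 φ := by
      change eval (t • v) φ ≤ 1
      rw [hφ.eval_smul]
      have : 0 ≤ t ^ n := by positivity
      nlinarith
    have := hR _ hmem
    rw [norm_smul, Real.norm_of_nonneg (by positivity), div_mul_cancel₀ _ hvn.ne'] at this
    linarith [le_abs_self R]
  · intro hpos
    obtain ⟨m, hm, hle⟩ := hφ.exists_pos_mul_norm_pow_le hpos
    refine isBounded_iff_forall_norm_le.2 ⟨max 1 (1 / m), fun x (hx : eval x φ ≤ 1) => ?_⟩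
    rcases eq_or_ne x 0 with rfl | hx0
    · simp
    rcases le_or_gt ‖x‖ 1 with h1 | h1
    · exact le_max_of_le_left h1
    refine le_max_of_le_right ((le_div_iff₀' hm).2 ?_)
    calc m * ‖x‖ ≤ m * ‖x‖ ^ n := by gcongr; exact le_self_pow₀ h1.le hn
      _ ≤ 1 := (hle x hx0).trans hx

theorem IsHomogeneous.volume_G1_eq_top_of_eval_neg [NeZero k] (hφ : φ.IsHomogeneous n)
    {w : Fin k → ℝ} (hw : eval w φ < 0) : volume (G1 φ) = ⊤ := by
  set U := {x : Fin k → ℝ | eval x φ < 0}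
  have hUpos : volume U ≠ 0 :=
    ((isOpen_lt (continuous_eval φ) continuous_const).measure_pos volume ⟨w, hw⟩).ne'
  have hUsmul : (2 : ℝ) • U ⊆ U := by
    rintro _ ⟨u, hu, rfl⟩
    change eval ((2 : ℝ) • u) φ < 0
    rw [hφ.eval_smul]
    exact mul_neg_of_pos_of_neg (by positivity) hu
  have hUtop : volume U = ⊤ := by
    by_contra hfin
    have h := measure_mono (μ := volume) hUsmul
    rw [Measure.addHaar_smul, Module.finrank_fin_fun, ← one_mul (volume U), ← mul_assoc,
      mul_one, ENNReal.mul_le_mul_iff_left hUpos hfin, ENNReal.ofReal_le_one] at h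
    have : (2 : ℝ) ≤ |2 ^ k| := by
      rw [abs_of_pos (by positivity)]
      exact le_self_pow₀ one_le_two (NeZero.ne k)
    linarith
  exact top_le_iff.1 (hUtop ▸ measure_mono fun x (hx : eval x φ < 0) => hx.le.trans zero_le_one)

end SublevelSet

section BinaryForms

variable {n : ℕ}

theorem IsHomogeneous.support_subset_fin_two {R : Type*} [CommSemiring R]
    {φ : MvPolynomial (Fin 2) R} (hφ : φ.IsHomogeneous n) :
    φ.support ⊆ (range (n + 1)).image fun i => Finsupp.single 0 i + Finsupp.single 1 (n - i) := by
  intro d hd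
  have hdeg : d 0 + d 1 = n := by
    rw [← Fin.sum_univ_two, ← Finsupp.degree_eq_sum]
    by_contra h
    exact mem_support_iff.1 hd (hφ.coeff_eq_zero h)
  refine mem_image.2 ⟨d 0, mem_range.2 (by omega), ?_⟩
  ext i
  fin_cases i <;> simp [← hdeg]

theorem IsHomogeneous.eval_eq_sum_fin_two {R : Type*} [CommSemiring R]
    {φ : MvPolynomial (Fin 2) R} (hφ : φ.IsHomogeneous n) (x : Fin 2 → R) :
    eval x φ = ∑ i ∈ range (n + 1),
      coeff (Finsupp.single 0 i + Finsupp.single 1 (n - i)) φ * (x 0 ^ i * x 1 ^ (n - i)) := by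
  have hinj : Set.InjOn (fun i => Finsupp.single (0 : Fin 2) i + Finsupp.single 1 (n - i))
      (range (n + 1)) := fun i _ j _ hij => by
    simpa using DFunLike.congr_fun hij 0
  rw [eval_eq', sum_subset hφ.support_subset_fin_two fun d _ hd => by
    rw [notMem_support_iff.1 hd, zero_mul], sum_image hinj]
  refine sum_congr rfl fun i _ => ?_
  simp [Fin.prod_univ_two]

variable {φ : MvPolynomial (Fin 2) ℝ}

theorem IsHomogeneous.abs_eval_le (hφ : φ.IsHomogeneous n) {ε : ℝ}
    (hε : ∀ α, |coeff α φ| ≤ ε) (x : Fin 2 → ℝ) : |eval x φ| ≤ (n + 1) * ε * ‖x‖ ^ n := by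
  have hx : ∀ i, |x i| ≤ ‖x‖ := fun i => by simpa using norm_le_pi_norm x i
  have hε0 : 0 ≤ ε := (abs_nonneg _).trans (hε 0)
  rw [hφ.eval_eq_sum_fin_two]
  refine (abs_sum_le_sum_abs _ _).trans ?_
  calc ∑ i ∈ range (n + 1), |coeff (Finsupp.single 0 i + Finsupp.single 1 (n - i)) φ *
        (x 0 ^ i * x 1 ^ (n - i))|
      ≤ ∑ i ∈ range (n + 1), ε * ‖x‖ ^ n := sum_le_sum fun i hi => by
        calc _ = |coeff (Finsupp.single 0 i + Finsupp.single 1 (n - i)) φ| *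
              (|x 0| ^ i * |x 1| ^ (n - i)) := by simp only [abs_mul, abs_pow]
          _ ≤ ε * (‖x‖ ^ i * ‖x‖ ^ (n - i)) := by gcongr; exacts [hε _, hx 0, hx 1]
          _ = ε * ‖x‖ ^ n := by rw [← pow_add, Nat.add_sub_cancel' (mem_range_succ_iff.1 hi)]
    _ = (n + 1) * ε * ‖x‖ ^ n := by simp [mul_assoc]

theorem IsPosDef.exists_forall_isPosDef (hpos : φ.IsPosDef) (hφ : φ.IsHomogeneous n) :
    ∃ ε > 0, ∀ ψ : MvPolynomial (Fin 2) ℝ, ψ.IsHomogeneous n →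
      (∀ α, |coeff α ψ - coeff α φ| < ε) → ψ.IsPosDef := by
  obtain ⟨m, hm, hle⟩ := hφ.exists_pos_mul_norm_pow_le hpos
  refine ⟨m / (2 * (n + 1)), by positivity, fun ψ hψ hclose x hx => ?_⟩
  have hdiff := (hψ.sub hφ).abs_eval_le (fun α => by rw [coeff_sub]; exact (hclose α).le) x
  have hxn : 0 < ‖x‖ ^ n := pow_pos (norm_pos_iff.2 hx) n
  rw [map_sub, show (n + 1 : ℝ) * (m / (2 * (n + 1))) = m / 2 by field_simp] at hdiff
  nlinarith [(abs_le.1 hdiff).1, hle x hx]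

theorem IsHomogeneous.exists_eval_eq_of_nonneg_of_eval_one_zero (hφ : φ.IsHomogeneous 4)
    (hnonneg : ∀ x, 0 ≤ eval x φ) (h0 : eval ![1, 0] φ = 0) :
    ∃ c₀ c₁ c₂ : ℝ, ∀ x : Fin 2 → ℝ, eval x φ =
      c₂ * (x 0 * x 1) ^ 2 + c₁ * (x 0 * x 1) * x 1 ^ 2 + c₀ * x 1 ^ 4 := by
  set c : ℕ → ℝ := fun i => coeff (Finsupp.single 0 i + Finsupp.single 1 (4 - i)) φ
  have heval : ∀ x : Fin 2 → ℝ, eval x φ = c 0 * x 1 ^ 4 + c 1 * x 0 * x 1 ^ 3 +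
      c 2 * x 0 ^ 2 * x 1 ^ 2 + c 3 * x 0 ^ 3 * x 1 + c 4 * x 0 ^ 4 := fun x => by
    simp only [hφ.eval_eq_sum_fin_two, sum_range_succ, sum_range_zero, c]
    ring
  have hc4 : c 4 = 0 := by simpa [heval] using h0
  have hc3 : c 3 = 0 := by
    have hline : (fun s : ℝ => eval ![1, s] φ) =
        fun s => c 0 * s ^ 4 + c 1 * s ^ 3 + c 2 * s ^ 2 + c 3 * s + c 4 := by
      funext s
      simp [heval]
    have hmin : IsLocalMin (fun s : ℝ => eval ![1, s] φ) 0 :=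
      Filter.Eventually.of_forall fun s => h0.trans_le (hnonneg ![1, s])
    rw [hline] at hmin
    refine hmin.hasDerivAt_eq_zero ?_
    simpa using (((((hasDerivAt_pow 4 (0 : ℝ)).const_mul (c 0)).add
      ((hasDerivAt_pow 3 (0 : ℝ)).const_mul (c 1))).add
      ((hasDerivAt_pow 2 (0 : ℝ)).const_mul (c 2))).add
      ((hasDerivAt_id (0 : ℝ)).const_mul (c 3))).add_const (c 4)
  exact ⟨c 0, c 1, c 2, fun x => by rw [heval, hc3, hc4]; ring⟩

theorem IsHomogeneous.volume_G1_eq_top_of_nonneg_of_eval_one_zero (hφ : φ.IsHomogeneous 4)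
    (hnonneg : ∀ x, 0 ≤ eval x φ) (h0 : eval ![1, 0] φ = 0) : volume (G1 φ) = ⊤ := by
  obtain ⟨c₀, c₁, c₂, heval⟩ := hφ.exists_eval_eq_of_nonneg_of_eval_one_zero hnonneg h0
  set K := |c₀| + |c₁| + |c₂|
  have hδ : 0 < (K + 1)⁻¹ := by positivity
  refine top_le_iff.1 ((volume_setOf_one_le_and_abs_mul_le_eq_top hδ).symm.trans_le
    (measure_mono fun x ⟨hx0, hxδ⟩ => ?_))
  set p := x 0 * x 1
  have hp1 : |p| ≤ 1 := hxδ.trans (inv_le_one_of_one_le₀ (le_add_of_nonneg_left (by positivity)))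
  have hq : |x 1| ≤ |p| := by
    rw [abs_mul]
    exact le_mul_of_one_le_left (abs_nonneg _) (hx0.trans (le_abs_self _))
  have hq1 : |x 1| ≤ 1 := hq.trans hp1
  have t₂ : c₂ * p ^ 2 ≤ |c₂| * |p| :=
    calc c₂ * p ^ 2 ≤ |c₂| * |p| ^ 2 := by rw [← abs_pow, ← abs_mul]; exact le_abs_self _
      _ ≤ |c₂| * |p| := by gcongr; exact pow_le_of_le_one (abs_nonneg _) hp1 two_ne_zero
  have t₁ : c₁ * p * x 1 ^ 2 ≤ |c₁| * |p| :=
    calc c₁ * p * x 1 ^ 2 ≤ |c₁| * |p| * |x 1| ^ 2 := by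
          rw [← abs_pow, ← abs_mul, ← abs_mul]; exact le_abs_self _
      _ ≤ |c₁| * |p| := mul_le_of_le_one_right (by positivity) (pow_le_one₀ (abs_nonneg _) hq1)
  have t₀ : c₀ * x 1 ^ 4 ≤ |c₀| * |p| :=
    calc c₀ * x 1 ^ 4 ≤ |c₀| * |x 1| ^ 4 := by rw [← abs_pow, ← abs_mul]; exact le_abs_self _
      _ ≤ |c₀| * |p| := by
          gcongr; exact (pow_le_of_le_one (abs_nonneg _) hq1 (by norm_num)).trans hq
  calc eval x φ = c₂ * p ^ 2 + c₁ * p * x 1 ^ 2 + c₀ * x 1 ^ 4 := heval x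
    _ ≤ K * |p| := by linarith
    _ ≤ K * (K + 1)⁻¹ := by gcongr
    _ ≤ 1 := by rw [mul_inv_le_iff₀ (by positivity)]; linarith

theorem IsHomogeneous.volume_G1_eq_top_of_nonneg_of_eval_eq_zero (hφ : φ.IsHomogeneous 4)
    (hnonneg : ∀ x, 0 ≤ eval x φ) {v : Fin 2 → ℝ} (hv : v ≠ 0) (h0 : eval v φ = 0) :
    volume (G1 φ) = ⊤ := by
  set M : Matrix (Fin 2) (Fin 2) ℝ := !![v 0, -v 1; v 1, v 0]
  have hdet : M.det ≠ 0 := by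
    rw [det_fin_two_of, neg_mul, sub_neg_eq_add, Ne, mul_self_add_mul_self_eq_zero]
    exact fun h => hv (by ext i; fin_cases i; exacts [h.1, h.2])
  have hMe : M *ᵥ ![1, 0] = v := by
    ext i
    fin_cases i <;> simp [M]
  have htop := (hφ.linearSubst M).volume_G1_eq_top_of_nonneg_of_eval_one_zero
    (fun x => by rw [eval_linearSubst]; exact hnonneg _) (by rw [eval_linearSubst, hMe, h0])
  rw [volume_G1_linearSubst M hdet] at htop
  exact (ENNReal.mul_eq_top.1 htop).elim And.right fun h => absurd h.1 ENNReal.ofReal_ne_top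

theorem IsHomogeneous.volume_G1_lt_top_iff (hφ : φ.IsHomogeneous 4) :
    volume (G1 φ) < ⊤ ↔ φ.IsPosDef := by
  refine ⟨fun hfin => ?_, fun hpos => ((hφ.isBounded_G1_iff four_ne_zero).2 hpos).measure_lt_top⟩
  by_contra hpos
  obtain ⟨v, hv, hle⟩ : ∃ v, v ≠ 0 ∧ eval v φ ≤ 0 := by simpa [IsPosDef] using hpos
  refine hfin.ne ?_
  by_cases hneg : ∃ w, eval w φ < 0
  · obtain ⟨w, hw⟩ := hneg
    exact hφ.volume_G1_eq_top_of_eval_neg hw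
  · simp only [not_exists, not_lt] at hneg
    exact hφ.volume_G1_eq_top_of_nonneg_of_eval_eq_zero hneg hv (le_antisymm hle (hneg v))

end BinaryForms

end MvPolynomial

theorem eval_canon (a b c : ℝ) (x : Fin 2 → ℝ) :
    eval x (canon a b c) = a * (x 0 ^ 2) ^ 2 + 2 * b * x 0 ^ 2 * x 1 ^ 2 + c * (x 1 ^ 2) ^ 2 := by
  simp only [canon, map_add, map_mul, eval_C, eval_pow, eval_X]
  ring

theorem isHomogeneous_canon (a b c : ℝ) : (canon a b c).IsHomogeneous 4 :=
  ((isHomogeneous_C_mul_X_pow a 0 4).add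
    (((isHomogeneous_C_mul_X_pow (2 * b) 0 2).mul (isHomogeneous_X_pow 1 2)))).add
    (isHomogeneous_C_mul_X_pow c 1 4)

theorem isPosDef_canon_iff {a b c : ℝ} :
    (canon a b c).IsPosDef ↔ 0 < a ∧ 0 < c ∧ -√(a * c) < b := by
  rw [← quadratic_pos_on_quadrant_iff]
  refine ⟨fun h X Y hX hY hXY => ?_, fun h x hx => ?_⟩
  · have hne : ![√X, √Y] ≠ 0 := by
      rcases eq_or_lt_of_le hX with rfl | hX'
      · exact Function.ne_iff.2 ⟨1, by simpa using Real.sqrt_ne_zero'.2 (by linarith)⟩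
      · exact Function.ne_iff.2 ⟨0, by simpa using Real.sqrt_ne_zero'.2 hX'⟩
    simpa [eval_canon, Real.sq_sqrt hX, Real.sq_sqrt hY] using h _ hne
  · rw [eval_canon]
    refine h _ _ (sq_nonneg _) (sq_nonneg _) ?_
    obtain ⟨i, hi⟩ := Function.ne_iff.1 hx
    fin_cases i <;> simp at hi <;> positivity

/-- Lemma 2.3 (3) of the paper: for degree-4 homogeneous polynomials on `ℝ²`, finiteness of
`|G₁(g)|` is equivalent to boundedness of `G₁(g)`; `𝔽₄(ℝ²)` is open (in the coefficient
topology); and for the canonical form `a x⁴ + 2b x²y² + c y⁴` both are equivalent to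
`a > 0`, `c > 0` and `b > -√(ac)`. -/
theorem stmt_7 :
    (∀ g : MvPolynomial (Fin 2) ℝ, g.IsHomogeneous 4 →
      (volume (G1 g) < ⊤ ↔ Bornology.IsBounded (G1 g))) ∧
    (∀ g : MvPolynomial (Fin 2) ℝ, g.IsHomogeneous 4 → volume (G1 g) < ⊤ →
      ∃ ε > (0 : ℝ), ∀ g' : MvPolynomial (Fin 2) ℝ, g'.IsHomogeneous 4 →
        (∀ α, |g'.coeff α - g.coeff α| < ε) → volume (G1 g') < ⊤) ∧
    (∀ a b c : ℝ,
      (volume (G1 (canon a b c)) < ⊤ ↔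
        (0 < a ∧ 0 < c ∧ -Real.sqrt (a * c) < b)) ∧
      (volume (G1 (canon a b c)) < ⊤ ↔ Bornology.IsBounded (G1 (canon a b c)))) := by
  have hfin_iff_bdd : ∀ g : MvPolynomial (Fin 2) ℝ, g.IsHomogeneous 4 →
      (volume (G1 g) < ⊤ ↔ Bornology.IsBounded (G1 g)) := fun g hg =>
    hg.volume_G1_lt_top_iff.trans (hg.isBounded_G1_iff four_ne_zero).symm
  refine ⟨hfin_iff_bdd, fun g hg hfin => ?_, fun a b c =>
    ⟨(isHomogeneous_canon a b c).volume_G1_lt_top_iff.trans isPosDef_canon_iff,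
      hfin_iff_bdd _ (isHomogeneous_canon a b c)⟩⟩
  obtain ⟨ε, hε, hnear⟩ := (hg.volume_G1_lt_top_iff.1 hfin).exists_forall_isPosDef hg
  exact ⟨ε, hε, fun g' hg' hclose => hg'.volume_G1_lt_top_iff.2 (hnear g' hg' hclose)⟩
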